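/- One-sided limits and sign reversal of the normalized output at a zero: Let n, m be positive integers, A ∈ ℝ^{n×n}, B ∈ ℝ^{n×m}, and let w ∈ ℝⁿ be such that Bᵀ (Aᵀ)^j w ≠ 0 for some j ∈ ℕ. Let p := min{ j ∈ ℕ : Bᵀ (Aᵀ)^j w ≠ 0 } and a := (1/p!)·Bᵀ (Aᵀ)^p w. Then there exists δ > 0 such that Bᵀ e^{sAᵀ} w ≠ 0 for all s with 0 < |s| < δ, and the normalized output satisfies the one-sided limits lim_{s→0⁺} Bᵀ e^{sAᵀ} w / ‖Bᵀ e^{sAᵀ} w‖ = a/‖a‖ and lim_{s→0⁻} Bᵀ e^{sAᵀ} w / ‖Bᵀ e^{sAᵀ} w‖ = (−1)^p · a/‖a‖. In particular, if p is odd the two one-sided limits sum to zero (the normalized output jumps from one direction to the reverse direction), and if p is even they coincide. -/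

import Mathlib

/-!
Splitting the exponential series after `p` terms gives
`e^{sX} = ∑_{k<p} sᵏ/k! Xᵏ + sᵖ R(s)` with `R(s) = ∑ₖ sᵏ/(k+p)! X^{k+p}`, which is continuous
(dominated by the exponential series of `‖X‖` for `|s| ≤ 1`) with `R(0) = Xᵖ/p!`.
Applying `M ↦ Bᵀ M w` to `X = Aᵀ` kills the polynomial part by minimality of `p`, so the output
is `sᵖ g(s)` with `g(s) → a ≠ 0`. Normalizing removes `|sᵖ|` and keeps the sign of `sᵖ`,
which is `1` for `s > 0` and `(-1)ᵖ` for `s < 0`.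
-/

open Matrix NormedSpace

/-- The Euclidean norm of a finite real vector. -/
noncomputable def euclNorm {ι : Type*} [Fintype ι] (x : ι → ℝ) : ℝ :=
  Real.sqrt (∑ i, x i ^ 2)

open Filter Finset
open scoped Nat Topology

section ExpTail

variable {𝔸 : Type*} [NormedRing 𝔸] [NormedAlgebra ℝ 𝔸]

noncomputable def expTail (X : 𝔸) (p : ℕ) (s : ℝ) : 𝔸 :=
  ∑' k, s ^ k • ((k + p)! : ℝ)⁻¹ • X ^ (k + p)

theorem expTail_zero (X : 𝔸) (p : ℕ) : expTail X p 0 = (p ! : ℝ)⁻¹ • X ^ p := by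
  rw [expTail, tsum_eq_single 0 fun k hk => by simp [zero_pow hk]]
  simp

variable [CompleteSpace 𝔸]

theorem exp_smul_eq_sum_add_pow_smul_expTail (X : 𝔸) (p : ℕ) (s : ℝ) :
    exp (s • X) = ∑ k ∈ range p, s ^ k • (k ! : ℝ)⁻¹ • X ^ k + s ^ p • expTail X p s := by
  have hterm : ∀ k : ℕ, (k ! : ℝ)⁻¹ • (s • X) ^ k = s ^ k • (k ! : ℝ)⁻¹ • X ^ k := fun k => by
    rw [smul_pow, smul_comm]
  have hsum : Summable fun k : ℕ => s ^ k • (k ! : ℝ)⁻¹ • X ^ k := by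
    simpa only [hterm] using expSeries_summable' (𝕂 := ℝ) (s • X)
  rw [exp_eq_tsum ℝ]
  simp only [hterm]
  rw [← hsum.sum_add_tsum_nat_add p, expTail, ← tsum_const_smul'']
  congr 1
  refine tsum_congr fun k => ?_
  rw [smul_smul, smul_smul, ← pow_add, add_comm p, smul_smul]

theorem continuousAt_expTail (X : 𝔸) (p : ℕ) : ContinuousAt (expTail X p) 0 := by
  have hcont : ContinuousOn (expTail X p) (Set.Icc (-1) 1) := by
    refine continuousOn_tsum (fun k => by fun_prop)
      ((summable_nat_add_iff p).2 (norm_expSeries_summable' (𝕂 := ℝ) X)) fun k s hs => ?_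
    rw [norm_smul, norm_pow, Real.norm_eq_abs]
    exact mul_le_of_le_one_left (norm_nonneg _) (pow_le_one₀ (abs_nonneg s) (abs_le.2 hs))
  exact hcont.continuousAt (Icc_mem_nhds (by norm_num) (by norm_num))

variable {F : Type*} [NormedAddCommGroup F] [NormedSpace ℝ F]

theorem apply_exp_smul_eq_pow_smul {X : 𝔸} {p : ℕ} (L : 𝔸 →L[ℝ] F)
    (hL : ∀ j < p, L (X ^ j) = 0) (s : ℝ) :
    L (exp (s • X)) = s ^ p • L (expTail X p s) := by
  rw [exp_smul_eq_sum_add_pow_smul_expTail X p, map_add, map_sum, L.map_smul,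
    sum_eq_zero fun k hk => by
      rw [L.map_smul, L.map_smul, hL k (mem_range.1 hk), smul_zero, smul_zero],
    zero_add]

end ExpTail

theorem exists_pos_pow_smul_ne_zero {E : Type*} [NormedAddCommGroup E] [NormedSpace ℝ E]
    {g : ℝ → E} {a : E} (hg : Tendsto g (𝓝 0) (𝓝 a)) (ha : a ≠ 0) (p : ℕ) :
    ∃ δ : ℝ, 0 < δ ∧ ∀ s : ℝ, 0 < |s| → |s| < δ → s ^ p • g s ≠ 0 := by
  obtain ⟨δ, hδ, hne⟩ := Metric.eventually_nhds_iff.1 (hg.eventually_ne ha)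
  refine ⟨δ, hδ, fun s hs hsδ => smul_ne_zero (pow_ne_zero _ (abs_pos.1 hs)) (hne ?_)⟩
  rwa [Real.dist_0_eq_abs]

theorem abs_pow_inv_mul_pow_of_pos {s : ℝ} (hs : 0 < s) (p : ℕ) : |s ^ p|⁻¹ * s ^ p = 1 := by
  rw [abs_of_pos (pow_pos hs p), inv_mul_cancel₀ (pow_pos hs p).ne']

theorem abs_pow_inv_mul_pow_of_neg {s : ℝ} (hs : s < 0) (p : ℕ) :
    |s ^ p|⁻¹ * s ^ p = (-1) ^ p := by
  have h : 0 < (-s) ^ p := pow_pos (neg_pos.2 hs) p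
  rw [← neg_neg s, neg_pow, abs_mul, abs_pow, abs_neg, abs_one, one_pow, one_mul,
    abs_of_pos h, mul_comm, mul_assoc, mul_inv_cancel₀ h.ne', mul_one]

section EuclNorm

variable {ι : Type*} [Fintype ι]

theorem euclNorm_eq_norm (x : ι → ℝ) : euclNorm x = ‖WithLp.toLp 2 x‖ := by
  simp [EuclideanSpace.norm_eq, euclNorm]

theorem continuous_euclNorm : Continuous (euclNorm (ι := ι)) := by
  simp only [funext euclNorm_eq_norm]
  fun_prop

theorem euclNorm_smul (r : ℝ) (x : ι → ℝ) : euclNorm (r • x) = |r| * euclNorm x := by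
  simp only [euclNorm_eq_norm, WithLp.toLp_smul, norm_smul, Real.norm_eq_abs]

theorem euclNorm_ne_zero {x : ι → ℝ} (hx : x ≠ 0) : euclNorm x ≠ 0 := by
  simpa [euclNorm_eq_norm] using hx

theorem euclNorm_inv_smul_smul (r : ℝ) (x : ι → ℝ) :
    (euclNorm (r • x))⁻¹ • r • x = (|r|⁻¹ * r) • (euclNorm x)⁻¹ • x := by
  rw [euclNorm_smul, smul_smul, smul_smul, mul_inv]
  ring_nf

theorem tendsto_euclNorm_inv_smul_pow_smul {g : ℝ → ι → ℝ} {a : ι → ℝ}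
    (hg : Tendsto g (𝓝 0) (𝓝 a)) (ha : a ≠ 0) (p : ℕ) {l : Filter ℝ} (hl : l ≤ 𝓝 0) {σ : ℝ}
    (hσ : ∀ᶠ s in l, |s ^ p|⁻¹ * s ^ p = σ) :
    Tendsto (fun s => (euclNorm (s ^ p • g s))⁻¹ • s ^ p • g s) l
      (𝓝 (σ • (euclNorm a)⁻¹ • a)) := by
  have hnormalize : ContinuousAt (fun x : ι → ℝ => (euclNorm x)⁻¹ • x) a :=
    (continuous_euclNorm.continuousAt.inv₀ (euclNorm_ne_zero ha)).smul continuousAt_id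
  refine ((hnormalize.tendsto.comp (hg.mono_left hl)).const_smul σ).congr' ?_
  filter_upwards [hσ] with s hs
  rw [euclNorm_inv_smul_smul, hs, Function.comp_apply]

end EuclNorm

theorem normalized_output_one_sided_limits_general
    (n m : ℕ)
    (A : Matrix (Fin n) (Fin n) ℝ) (B : Matrix (Fin n) (Fin m) ℝ)
    (w : Fin n → ℝ) (hw : ∃ j : ℕ, Bᵀ.mulVec ((Aᵀ ^ j).mulVec w) ≠ 0)
    (p : ℕ) (hp : p = sInf {j : ℕ | Bᵀ.mulVec ((Aᵀ ^ j).mulVec w) ≠ 0})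
    (a : Fin m → ℝ)
    (ha : a = ((1 : ℝ) / (Nat.factorial p : ℝ)) • Bᵀ.mulVec ((Aᵀ ^ p).mulVec w)) :
    (∃ δ : ℝ, 0 < δ ∧ ∀ s : ℝ, 0 < |s| → |s| < δ →
        Bᵀ.mulVec ((exp (s • Aᵀ)).mulVec w) ≠ 0) ∧
    Filter.Tendsto
      (fun s : ℝ => (euclNorm (Bᵀ.mulVec ((exp (s • Aᵀ)).mulVec w)))⁻¹ •
        Bᵀ.mulVec ((exp (s • Aᵀ)).mulVec w))
      (nhdsWithin 0 (Set.Ioi 0)) (nhds ((euclNorm a)⁻¹ • a)) ∧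
    Filter.Tendsto
      (fun s : ℝ => (euclNorm (Bᵀ.mulVec ((exp (s • Aᵀ)).mulVec w)))⁻¹ •
        Bᵀ.mulVec ((exp (s • Aᵀ)).mulVec w))
      (nhdsWithin 0 (Set.Iio 0)) (nhds (((-1 : ℝ) ^ p * (euclNorm a)⁻¹) • a)) := by
  -- An auxiliary Banach-algebra norm; it induces the product topology, so `exp` is unchanged.
  let _ : NormedRing (Matrix (Fin n) (Fin n) ℝ) := Matrix.linftyOpNormedRing
  let _ : NormedAlgebra ℝ (Matrix (Fin n) (Fin n) ℝ) := Matrix.linftyOpNormedAlgebra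
  let L : Matrix (Fin n) (Fin n) ℝ →L[ℝ] (Fin m → ℝ) :=
    (Bᵀ.mulVecLin ∘ₗ (mulVecBilin ℝ ℝ).flip w).toContinuousLinearMap
  have hL : ∀ j < p, L (Aᵀ ^ j) = 0 := fun j hj => by
    by_contra h
    exact Nat.notMem_of_lt_sInf (hp ▸ hj) h
  have ha0 : a ≠ 0 := by
    rw [ha]
    exact smul_ne_zero (by positivity) (hp ▸ Nat.sInf_mem hw)
  have hg : Tendsto (fun s => L (expTail Aᵀ p s)) (𝓝 0) (𝓝 a) := by
    have hlim : L (expTail Aᵀ p 0) = a := by rw [expTail_zero, L.map_smul, ha, one_div]; rfl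
    exact hlim ▸ (L.continuous.continuousAt.comp (continuousAt_expTail Aᵀ p)).tendsto
  have hf : ∀ s : ℝ, Bᵀ.mulVec ((exp (s • Aᵀ)).mulVec w) = s ^ p • L (expTail Aᵀ p s) :=
    apply_exp_smul_eq_pow_smul L hL
  simp only [hf]
  refine ⟨exists_pos_pow_smul_ne_zero hg ha0 p, ?_, ?_⟩
  · simpa only [one_smul] using tendsto_euclNorm_inv_smul_pow_smul hg ha0 p nhdsWithin_le_nhds
      (eventually_nhdsWithin_of_forall (s := Set.Ioi 0) fun s hs =>
        abs_pow_inv_mul_pow_of_pos hs p)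
  · simpa only [mul_smul] using tendsto_euclNorm_inv_smul_pow_smul hg ha0 p nhdsWithin_le_nhds
      (eventually_nhdsWithin_of_forall (s := Set.Iio 0) fun s hs =>
        abs_pow_inv_mul_pow_of_neg hs p)

/-- **One-sided limits and sign reversal of the normalized output at a zero.**
Let `p` be the least `j` with `Bᵀ (Aᵀ)^j w ≠ 0` and `a := (1/p!)·Bᵀ (Aᵀ)^p w`. Then the
output `s ↦ Bᵀ e^{sAᵀ} w` is nonzero for `0 < |s| < δ` (some `δ > 0`), and its
normalization tends to `a/‖a‖` as `s → 0⁺` and to `(-1)^p · a/‖a‖` as `s → 0⁻`. -/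
theorem normalized_output_one_sided_limits
    (n m : ℕ) (hn : 0 < n) (hm : 0 < m)
    (A : Matrix (Fin n) (Fin n) ℝ) (B : Matrix (Fin n) (Fin m) ℝ)
    (w : Fin n → ℝ) (hw : ∃ j : ℕ, Bᵀ.mulVec ((Aᵀ ^ j).mulVec w) ≠ 0)
    (p : ℕ) (hp : p = sInf {j : ℕ | Bᵀ.mulVec ((Aᵀ ^ j).mulVec w) ≠ 0})
    (a : Fin m → ℝ)
    (ha : a = ((1 : ℝ) / (Nat.factorial p : ℝ)) • Bᵀ.mulVec ((Aᵀ ^ p).mulVec w)) :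
    (∃ δ : ℝ, 0 < δ ∧ ∀ s : ℝ, 0 < |s| → |s| < δ →
        Bᵀ.mulVec ((exp (s • Aᵀ)).mulVec w) ≠ 0) ∧
    Filter.Tendsto
      (fun s : ℝ => (euclNorm (Bᵀ.mulVec ((exp (s • Aᵀ)).mulVec w)))⁻¹ •
        Bᵀ.mulVec ((exp (s • Aᵀ)).mulVec w))
      (nhdsWithin 0 (Set.Ioi 0)) (nhds ((euclNorm a)⁻¹ • a)) ∧
    Filter.Tendsto
      (fun s : ℝ => (euclNorm (Bᵀ.mulVec ((exp (s • Aᵀ)).mulVec w)))⁻¹ •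
        Bᵀ.mulVec ((exp (s • Aᵀ)).mulVec w))
      (nhdsWithin 0 (Set.Iio 0)) (nhds (((-1 : ℝ) ^ p * (euclNorm a)⁻¹) • a)) :=
  normalized_output_one_sided_limits_general n m A B w hw p hp a ha
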